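/- arXiv:1507.02268 — 6 statements merged into one kernel-verified Lean document; each statement's English description precedes it below -/
import Mathlib

section
/- Let E be a linear subspace of R^n containing the column spans of A ∈ R^{n×d} and B ∈ R^{n×p}, and let U ∈ R^{n×r} have orthonormal columns forming a basis for E. If Π ∈ R^{m×n} satisfies ‖(ΠU)ᵀ(ΠU) − I‖ ≤ ε (operator norm), then ‖(ΠA)ᵀ(ΠB) − AᵀB‖ ≤ ε‖A‖‖B‖. -/
open Matrix

noncomputable def opNorm {α β : Type} [Fintype α] [Fintype β] [DecidableEq β]
    (A : Matrix α β ℝ) : ℝ :=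
  ‖LinearMap.toContinuousLinearMap (Matrix.toEuclideanLin A)‖

open scoped Matrix.Norms.L2Operator

lemma opNorm_eq {α β : Type} [Fintype α] [Fintype β] [DecidableEq β]
    (A : Matrix α β ℝ) : opNorm A = ‖A‖ := rfl

lemma opNorm_transpose {α β : Type} [Fintype α] [Fintype β] [DecidableEq α] [DecidableEq β]
    (A : Matrix α β ℝ) : ‖Aᵀ‖ = ‖A‖ := by
  rw [← Matrix.conjTranspose_eq_transpose_of_trivial, Matrix.l2_opNorm_conjTranspose]

lemma norm_one_le (r : ℕ) : ‖(1 : Matrix (Fin r) (Fin r) ℝ)‖ ≤ 1 := by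
  rw [Matrix.l2_opNorm_def]
  apply ContinuousLinearMap.opNorm_le_bound _ zero_le_one
  intro x
  simp [Matrix.toEuclideanLin_apply]

/-- if `Π` is an `ε`-subspace embedding for `U`, whose orthonormal columns span a
subspace containing the column spans of `A` and `B`, then `‖(ΠA)ᵀ(ΠB) − AᵀB‖ ≤ ε‖A‖‖B‖`. -/
theorem stmt0 {n d p r m : ℕ} (U : Matrix (Fin n) (Fin r) ℝ)
    (A : Matrix (Fin n) (Fin d) ℝ) (B : Matrix (Fin n) (Fin p) ℝ)
    (Φ : Matrix (Fin m) (Fin n) ℝ) (ε : ℝ)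
    (hU : Uᵀ * U = 1)
    (hA : ∃ W : Matrix (Fin r) (Fin d) ℝ, A = U * W)
    (hB : ∃ W : Matrix (Fin r) (Fin p) ℝ, B = U * W)
    (hΦ : opNorm ((Φ * U)ᵀ * (Φ * U) - 1) ≤ ε) :
    opNorm ((Φ * A)ᵀ * (Φ * B) - Aᵀ * B) ≤ ε * opNorm A * opNorm B := by
  obtain ⟨WA, rfl⟩ := hA
  obtain ⟨WB, rfl⟩ := hB
  simp only [opNorm_eq] at *
  -- norm of U is at most 1
  have hUt : ‖Uᵀ‖ = ‖U‖ := opNorm_transpose U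
  have hU1 : ‖U‖ ≤ 1 := by
    have h2 : ‖U‖ * ‖U‖ = ‖Uᵀ * U‖ := by
      rw [← Matrix.conjTranspose_eq_transpose_of_trivial,
        Matrix.l2_opNorm_conjTranspose_mul_self]
    have h3 : ‖U‖ * ‖U‖ ≤ 1 := by rw [h2, hU]; exact norm_one_le r
    nlinarith [norm_nonneg U]
  -- bounds on the factors
  have hWA : ‖WA‖ ≤ ‖U * WA‖ := by
    calc ‖WA‖ = ‖Uᵀ * (U * WA)‖ := by rw [← Matrix.mul_assoc, hU, Matrix.one_mul]
    _ ≤ ‖Uᵀ‖ * ‖U * WA‖ := Matrix.l2_opNorm_mul _ _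
    _ ≤ 1 * ‖U * WA‖ := by
        apply mul_le_mul_of_nonneg_right _ (norm_nonneg _); rw [hUt]; exact hU1
    _ = ‖U * WA‖ := one_mul _
  have hWB : ‖WB‖ ≤ ‖U * WB‖ := by
    calc ‖WB‖ = ‖Uᵀ * (U * WB)‖ := by rw [← Matrix.mul_assoc, hU, Matrix.one_mul]
    _ ≤ ‖Uᵀ‖ * ‖U * WB‖ := Matrix.l2_opNorm_mul _ _
    _ ≤ 1 * ‖U * WB‖ := by
        apply mul_le_mul_of_nonneg_right _ (norm_nonneg _); rw [hUt]; exact hU1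
    _ = ‖U * WB‖ := one_mul _
  have hε : 0 ≤ ε := le_trans (norm_nonneg _) hΦ
  -- algebraic identity
  have key : (Φ * (U * WA))ᵀ * (Φ * (U * WB)) - (U * WA)ᵀ * (U * WB)
      = WAᵀ * (((Φ * U)ᵀ * (Φ * U) - 1) * WB) := by
    have h2 : Uᵀ * (U * WB) = WB := by rw [← Matrix.mul_assoc, hU, Matrix.one_mul]
    simp only [Matrix.transpose_mul, Matrix.sub_mul, Matrix.mul_sub, Matrix.one_mul,
      Matrix.mul_assoc, h2]
  rw [key]
  calc ‖WAᵀ * (((Φ * U)ᵀ * (Φ * U) - 1) * WB)‖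
      ≤ ‖WAᵀ‖ * ‖((Φ * U)ᵀ * (Φ * U) - 1) * WB‖ := Matrix.l2_opNorm_mul _ _
    _ ≤ ‖WAᵀ‖ * (‖(Φ * U)ᵀ * (Φ * U) - 1‖ * ‖WB‖) :=
        mul_le_mul_of_nonneg_left (Matrix.l2_opNorm_mul _ _) (norm_nonneg _)
    _ = ‖(Φ * U)ᵀ * (Φ * U) - 1‖ * ‖WA‖ * ‖WB‖ := by rw [opNorm_transpose]; ring
    _ ≤ ε * ‖U * WA‖ * ‖U * WB‖ := by
        apply mul_le_mul
        · exact mul_le_mul hΦ hWA (norm_nonneg _) hε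
        · exact hWB
        · exact norm_nonneg _
        · positivity
end

section
/- Let A ∈ R^{n×d} have pairwise orthogonal columns a₁,…,a_d sorted so that ‖a_i‖₂ ≥ ‖a_{i+1}‖₂ for all i. Partition the columns into consecutive blocks of size k (padding with zero columns if necessary), letting A'₁,…,A'_q denote the blocks and s_i = ‖A'_i‖ the operator norm of the i-th block. Then Σ_i s_i² ≤ ‖A‖² + ‖A‖_F²/k. -/
/-! With pairwise orthogonal columns, `Aᵀ * A` is the diagonal matrix of squared column norms, so
`‖A‖²` is the largest squared column norm (the C*-identity `‖Aᴴ * A‖ = ‖A‖²`); for a block of sorted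
columns this is the norm of its first column. The first block therefore contributes at most `‖A‖²`,
and the first column of each later block is dominated by each of the `k` columns of the block
before it, so `k` times the remaining terms is at most `‖A‖_F²`. -/

open Matrix MeasureTheory

noncomputable def frobNorm {α β : Type} [Fintype α] [Fintype β] (A : Matrix α β ℝ) : ℝ :=
  Real.sqrt (∑ i, ∑ j, A i j ^ 2)

/-- The `i`-th block of `k` consecutive columns of `A`. -/
def colBlock {n q k : ℕ} (A : Matrix (Fin n) (Fin (q * k)) ℝ) (i : Fin q) :
    Matrix (Fin n) (Fin k) ℝ :=
  Matrix.of fun r c => A r ⟨i.1 * k + c.1, by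
    have h1 : i.1 * k + c.1 < (i.1 + 1) * k := by nlinarith [c.2]
    have h2 : (i.1 + 1) * k ≤ q * k := Nat.mul_le_mul_right k i.2
    omega⟩

open scoped Matrix.Norms.L2Operator

def colNormSq {α β : Type*} [Fintype α] (A : Matrix α β ℝ) (j : β) : ℝ := ∑ r, A r j ^ 2

section ColNormSq

variable {α β : Type} [Fintype α] (A : Matrix α β ℝ)

lemma colNormSq_nonneg (j : β) : 0 ≤ colNormSq A j := by
  unfold colNormSq
  positivity

lemma frobNorm_sq_eq_sum_colNormSq [Fintype β] : frobNorm A ^ 2 = ∑ j, colNormSq A j := by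
  rw [frobNorm, Real.sq_sqrt (by positivity), Finset.sum_comm]
  rfl

variable [DecidableEq β]

lemma transpose_mul_self_eq_diagonal_colNormSq (horth : ∀ i j, i ≠ j → ∑ r, A r i * A r j = 0) :
    Aᵀ * A = diagonal (colNormSq A) := by
  ext i j
  rw [mul_apply, diagonal_apply]
  split_ifs with h
  · subst h
    simp [colNormSq, sq]
  · exact horth i j h

variable [Fintype β]

lemma opNorm_sq_eq_norm_colNormSq (horth : ∀ i j, i ≠ j → ∑ r, A r i * A r j = 0) :
    opNorm A ^ 2 = ‖colNormSq A‖ := by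
  rw [show opNorm A = ‖A‖ from rfl, sq, ← l2_opNorm_conjTranspose_mul_self,
    conjTranspose_eq_transpose_of_trivial, transpose_mul_self_eq_diagonal_colNormSq A horth,
    l2_opNorm_diagonal]

lemma colNormSq_le_opNorm_sq (horth : ∀ i j, i ≠ j → ∑ r, A r i * A r j = 0) (j : β) :
    colNormSq A j ≤ opNorm A ^ 2 := by
  rw [opNorm_sq_eq_norm_colNormSq A horth]
  exact (le_abs_self _).trans (norm_le_pi_norm (colNormSq A) j)

lemma opNorm_sq_le_of_colNormSq_le (horth : ∀ i j, i ≠ j → ∑ r, A r i * A r j = 0) {M : ℝ}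
    (hM : 0 ≤ M) (hcol : ∀ j, colNormSq A j ≤ M) :
    opNorm A ^ 2 ≤ M := by
  rw [opNorm_sq_eq_norm_colNormSq A horth, pi_norm_le_iff_of_nonneg hM]
  intro j
  rw [Real.norm_of_nonneg (colNormSq_nonneg A j)]
  exact hcol j

end ColNormSq

lemma mul_sum_range_succ_mul_le {f : ℕ → ℝ} (hf : Antitone f) (k q : ℕ) :
    k * ∑ i ∈ Finset.range q, f ((i + 1) * k) ≤ ∑ j ∈ Finset.range (q * k), f j := by
  induction q with
  | zero => simp
  | succ q ih =>
    have hblock : k * f (q * k + k) ≤ ∑ c ∈ Finset.range k, f (q * k + c) := by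
      simpa using Finset.card_nsmul_le_sum (Finset.range k) (fun c => f (q * k + c)) _
        fun c hc => hf (by rw [Finset.mem_range] at hc; omega)
    rw [Finset.sum_range_succ, mul_add, add_mul, one_mul, Finset.sum_range_add]
    exact add_le_add ih hblock

lemma sum_range_mul_le_add_div {f : ℕ → ℝ} (hf : Antitone f) (hf0 : ∀ j, 0 ≤ f j) {k : ℕ}
    (hk : 0 < k) (q : ℕ) :
    ∑ i ∈ Finset.range q, f (i * k) ≤ f 0 + (∑ j ∈ Finset.range (q * k), f j) / k := by
  rcases q with _ | q
  · simpa using hf0 0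
  have hk' : (0 : ℝ) < k := by exact_mod_cast hk
  have htail : ∑ j ∈ Finset.range (q * k), f j ≤ ∑ j ∈ Finset.range ((q + 1) * k), f j :=
    Finset.sum_le_sum_of_subset_of_nonneg (Finset.range_mono (by nlinarith))
      fun j _ _ => hf0 j
  rw [Finset.sum_range_succ', zero_mul, add_comm]
  gcongr
  rw [le_div_iff₀ hk', mul_comm]
  exact (mul_sum_range_succ_mul_le hf k q).trans htail

lemma opNorm_sq_eq_colNormSq_zero {α : Type} [Fintype α] {k : ℕ} (hk : 0 < k)
    (A : Matrix α (Fin k) ℝ) (horth : ∀ i j, i ≠ j → ∑ r, A r i * A r j = 0)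
    (hsort : Antitone (colNormSq A)) :
    opNorm A ^ 2 = colNormSq A ⟨0, hk⟩ :=
  le_antisymm
    (opNorm_sq_le_of_colNormSq_le A horth (colNormSq_nonneg A _) fun j =>
      hsort (Nat.zero_le j.val))
    (colNormSq_le_opNorm_sq A horth _)

section ColBlock

variable {n q k : ℕ} (A : Matrix (Fin n) (Fin (q * k)) ℝ) (i : Fin q)

lemma colBlock_orthogonal (horth : ∀ i j, i ≠ j → ∑ r, A r i * A r j = 0) :
    ∀ c c', c ≠ c' → ∑ r, colBlock A i r c * colBlock A i r c' = 0 := by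
  intro _ _ hcc'
  refine horth _ _ fun h => hcc' (Fin.ext ?_)
  simpa using h

lemma antitone_colNormSq_colBlock (hsort : Antitone (colNormSq A)) :
    Antitone (colNormSq (colBlock A i)) :=
  fun _ _ hcc' => hsort (Fin.mk_le_mk.mpr (Nat.add_le_add_left (Fin.le_def.mp hcc') _))

end ColBlock

lemma antitone_dite_lt_of_nonneg {m : ℕ} {g : Fin m → ℝ} (hg : Antitone g) (hg0 : ∀ j, 0 ≤ g j) :
    Antitone fun j : ℕ => if h : j < m then g ⟨j, h⟩ else 0 := by
  intro i j hij
  dsimp only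
  split_ifs with hj hi hi
  · exact hg hij
  · omega
  · exact hg0 _
  · rfl

/-- for a matrix with orthogonal columns sorted by norm, partitioned into
consecutive blocks of `k` columns, the squared operator norms of the blocks sum to at most
`‖A‖² + ‖A‖_F²/k`. -/
theorem stmt2 {n q k : ℕ} (hk : 0 < k) (A : Matrix (Fin n) (Fin (q * k)) ℝ)
    (horth : ∀ i j : Fin (q * k), i ≠ j → (∑ r, A r i * A r j) = 0)
    (hsort : ∀ i j : Fin (q * k), i ≤ j → (∑ r, A r j ^ 2) ≤ ∑ r, A r i ^ 2) :
    ∑ i : Fin q, opNorm (colBlock A i) ^ 2 ≤ opNorm A ^ 2 + frobNorm A ^ 2 / k := by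
  have hanti : Antitone (colNormSq A) := fun i j => hsort i j
  set f : ℕ → ℝ := fun j => if h : j < q * k then colNormSq A ⟨j, h⟩ else 0 with hf
  have hblock (i : Fin q) : opNorm (colBlock A i) ^ 2 = f (i * k) := by
    rw [opNorm_sq_eq_colNormSq_zero hk _ (colBlock_orthogonal A i horth)
      (antitone_colNormSq_colBlock A i hanti)]
    simp only [hf, dif_pos (Nat.mul_lt_mul_of_pos_right i.2 hk)]
    rfl
  have hfirst : f 0 ≤ opNorm A ^ 2 := by
    simp only [hf]
    split_ifs
    · exact colNormSq_le_opNorm_sq A horth _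
    · positivity
  have hfrob : ∑ j ∈ Finset.range (q * k), f j = frobNorm A ^ 2 := by
    rw [frobNorm_sq_eq_sum_colNormSq, ← Fin.sum_univ_eq_sum_range]
    simp only [hf, Fin.is_lt, dif_pos]
  calc ∑ i : Fin q, opNorm (colBlock A i) ^ 2 = ∑ i ∈ Finset.range q, f (i * k) := by
        simp only [hblock, Fin.sum_univ_eq_sum_range (fun i => f (i * k))]
    _ ≤ f 0 + (∑ j ∈ Finset.range (q * k), f j) / k :=
        sum_range_mul_le_add_div (antitone_dite_lt_of_nonneg hanti (colNormSq_nonneg A))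
          (fun j => by split_ifs; exacts [colNormSq_nonneg A _, le_rfl]) hk q
    _ ≤ opNorm A ^ 2 + frobNorm A ^ 2 / k := by rw [hfrob]; gcongr
end

section
/- Let C be an m×n matrix partitioned into k×k blocks C_{{i},{j}}, and let C' be the matrix whose (i,j) entry is the operator norm ‖C_{{i},{j}}‖. Then ‖C‖ ≤ ‖C'‖, i.e., the operator norm of a block matrix is at most the operator norm of the matrix of block operator norms. -/
/-!
Write `x_j` for the blocks of a vector `x` and `x'` for the vector of their norms, so that
`‖x'‖ = ‖x‖`. By the triangle inequality the `i`-th block of `C x` has norm at most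
`∑ⱼ ‖C_{ij}‖ ‖x_j‖ = (C' x')_i`, hence `‖C x‖ = ‖(C x)'‖ ≤ ‖C' x'‖ ≤ ‖C'‖ ‖x‖`.
-/

open Matrix MeasureTheory

section OpNorm

variable {α β : Type} [Fintype α] [Fintype β] [DecidableEq β]

lemma opNorm_nonneg (A : Matrix α β ℝ) : 0 ≤ opNorm A := norm_nonneg _

lemma norm_toEuclideanLin_le (A : Matrix α β ℝ) (x : EuclideanSpace ℝ β) :
    ‖toEuclideanLin A x‖ ≤ opNorm A * ‖x‖ :=
  (LinearMap.toContinuousLinearMap (toEuclideanLin A)).le_opNorm x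

lemma opNorm_le_of_bound (A : Matrix α β ℝ) {c : ℝ} (hc : 0 ≤ c)
    (h : ∀ x : EuclideanSpace ℝ β, ‖toEuclideanLin A x‖ ≤ c * ‖x‖) : opNorm A ≤ c :=
  ContinuousLinearMap.opNorm_le_bound _ hc h

end OpNorm

lemma PiLp.norm_le_norm_of_forall_le {ι : Type*} [Fintype ι] {β γ : ι → Type*}
    [∀ i, SeminormedAddCommGroup (β i)] [∀ i, SeminormedAddCommGroup (γ i)]
    {x : PiLp 2 β} {y : PiLp 2 γ} (h : ∀ i, ‖x i‖ ≤ ‖y i‖) : ‖x‖ ≤ ‖y‖ := by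
  refine le_of_sq_le_sq ?_ (norm_nonneg y)
  rw [PiLp.norm_sq_eq_of_L2, PiLp.norm_sq_eq_of_L2]
  exact Finset.sum_le_sum fun i _ => pow_le_pow_left₀ (norm_nonneg _) (h i) 2

namespace EuclideanSpace

variable {n l : Type} [Fintype n] [Fintype l]

def block (x : EuclideanSpace ℝ (n × l)) (j : n) : EuclideanSpace ℝ l :=
  WithLp.toLp 2 fun b => x (j, b)

noncomputable def blockNorms (x : EuclideanSpace ℝ (n × l)) : EuclideanSpace ℝ n :=
  WithLp.toLp 2 fun j => ‖x.block j‖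

lemma norm_sq_eq_sum_norm_block_sq (x : EuclideanSpace ℝ (n × l)) :
    ‖x‖ ^ 2 = ∑ j, ‖x.block j‖ ^ 2 := by
  simp only [real_norm_sq_eq, Fintype.sum_prod_type, block]

lemma norm_blockNorms (x : EuclideanSpace ℝ (n × l)) : ‖x.blockNorms‖ = ‖x‖ := by
  refine (sq_eq_sq₀ (norm_nonneg _) (norm_nonneg _)).mp ?_
  rw [norm_sq_eq_sum_norm_block_sq, real_norm_sq_eq]
  simp [blockNorms]

end EuclideanSpace

noncomputable def blockOpNorms {m n k l : Type} [Fintype k] [Fintype l] [DecidableEq l]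
    (C : Matrix (m × k) (n × l) ℝ) : Matrix m n ℝ :=
  of fun i j => opNorm ((comp m n k l ℝ).symm C i j)

variable {m n k l : Type} [Fintype n] [Fintype l] [DecidableEq n] [DecidableEq l]

open EuclideanSpace

lemma block_toEuclideanLin (C : Matrix (m × k) (n × l) ℝ) (x : EuclideanSpace ℝ (n × l)) (i : m) :
    (toEuclideanLin C x).block i
      = ∑ j, toEuclideanLin ((comp m n k l ℝ).symm C i j) (x.block j) := by
  ext a
  simp [block, mulVec, dotProduct, Fintype.sum_prod_type]

variable [Fintype k]

lemma norm_block_toEuclideanLin_le (C : Matrix (m × k) (n × l) ℝ) (x : EuclideanSpace ℝ (n × l))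
    (i : m) : ‖(toEuclideanLin C x).block i‖ ≤ (blockOpNorms C *ᵥ x.blockNorms) i := by
  rw [block_toEuclideanLin]
  exact (norm_sum_le _ _).trans (Finset.sum_le_sum fun j _ => norm_toEuclideanLin_le _ _)

theorem opNorm_le_opNorm_blockOpNorms [Fintype m] (C : Matrix (m × k) (n × l) ℝ) :
    opNorm C ≤ opNorm (blockOpNorms C) := by
  refine opNorm_le_of_bound C (opNorm_nonneg _) fun x => ?_
  calc ‖toEuclideanLin C x‖ = ‖(toEuclideanLin C x).blockNorms‖ := (norm_blockNorms _).symm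
    _ ≤ ‖toEuclideanLin (blockOpNorms C) x.blockNorms‖ :=
      PiLp.norm_le_norm_of_forall_le fun i => by
        simpa [blockNorms] using (norm_block_toEuclideanLin_le C x i).trans (le_abs_self _)
    _ ≤ opNorm (blockOpNorms C) * ‖x.blockNorms‖ := norm_toEuclideanLin_le _ _
    _ = opNorm (blockOpNorms C) * ‖x‖ := by rw [norm_blockNorms]

/-- the operator norm of a block matrix is at most the operator norm of the
matrix of block operator norms. -/
theorem stmt5 {p q k : ℕ} (C : Matrix (Fin p × Fin k) (Fin q × Fin k) ℝ)
    (C' : Matrix (Fin p) (Fin q) ℝ)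
    (hC' : ∀ i j, C' i j = opNorm (Matrix.of fun a b => C (i, a) (j, b))) :
    opNorm C ≤ opNorm C' := by
  obtain rfl : C' = blockOpNorms C := ext hC'
  exact opNorm_le_opNorm_blockOpNorms C
end

section
/- For any U ∈ R^{n×d} with orthonormal columns, there exists a finite set X ⊂ R^n with |X| ≤ 9^d, each element of norm at most 1, such that for every matrix Π with n columns: ‖(ΠU)ᵀ(ΠU) − I‖ ≤ 2·sup_{x∈X} |‖Πx‖² − 1|. -/
open Matrix MeasureTheory

/-!
A maximal `1/4`-separated subset `T` of the unit sphere of `ℝ^d` is a `1/4`-net of it, and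
comparing the volume of the disjoint balls of radius `1/8` around its points with that of the
ball of radius `9/8` gives `|T| ≤ 9^d`; take `X = U T`.
The matrix `A = (ΠU)ᵀ(ΠU) - I` is symmetric with quadratic form `y ↦ ‖ΠUy‖² - ‖y‖²`, which is
bounded by `s` on `T`. Moving from a unit vector to a point of `T` at distance at most `1/4`
changes `⟪Ay, y⟫` by at most `‖A‖/2`, and the norm of a symmetric operator is the supremum of
its quadratic form on the unit sphere, so `‖A‖ ≤ s + ‖A‖/2`.
-/

open Metric Module RCLike
open scoped NNReal ENNReal InnerProductSpace

theorem IsCompact.packingNumber_ne_top {X : Type*} [PseudoEMetricSpace X] {A : Set X}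
    (hA : IsCompact A) {ε : ℝ≥0} (hε : ε ≠ 0) : packingNumber ε A ≠ ⊤ := by
  obtain ⟨N, -, hNfin, hN⟩ := exists_finite_isCover_of_isCompact (ε := ε / 2) (by simpa) hA
  refine ne_top_of_le_ne_top hNfin.encard_lt_top.ne ?_
  calc packingNumber ε A = packingNumber (2 * (ε / 2)) A := by rw [mul_div_cancel₀ _ two_ne_zero]
    _ ≤ externalCoveringNumber (ε / 2) A := packingNumber_two_mul_le_externalCoveringNumber _ _
    _ ≤ N.encard := hN.externalCoveringNumber_le_encard

section Packing

variable {E : Type*} [NormedAddCommGroup E] [NormedSpace ℝ E] [FiniteDimensional ℝ E]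
  [Nontrivial E]

theorem Metric.IsSeparated.card_le_of_subset_closedBall {ε : ℝ≥0} (hε : 0 < ε)
    {C : Finset E} (hsep : IsSeparated ε (C : Set E)) (hC : (C : Set E) ⊆ closedBall 0 1) :
    (C.card : ℝ) ≤ (1 + 2 / ε) ^ finrank ℝ E := by
  borelize E
  set μ : Measure E := Measure.addHaar
  have hdisj : (C : Set E).PairwiseDisjoint (ball · (ε / 2)) := fun x hx y hy hxy ↦ by
    have : (ε : ℝ≥0∞) < edist x y := hsep hx hy hxy
    rw [edist_nndist, ENNReal.coe_lt_coe, ← NNReal.coe_lt_coe, coe_nndist] at this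
    exact ball_disjoint_ball (by linarith)
  have hsub : (⋃ x ∈ C, ball x (ε / 2)) ⊆ ball 0 (1 + ε / 2) := by
    simp only [Set.iUnion_subset_iff]
    intro x hx
    exact ball_subset_ball' (by linarith [mem_closedBall.1 (hC hx)])
  have hvol := measure_mono (μ := μ) hsub
  rw [measure_biUnion_finset hdisj (fun _ _ ↦ measurableSet_ball)] at hvol
  simp only [Measure.addHaar_ball μ _ (by positivity : (0 : ℝ) ≤ ε / 2),
    Measure.addHaar_ball μ _ (by positivity : (0 : ℝ) ≤ 1 + ε / 2),
    Finset.sum_const, nsmul_eq_mul, ← mul_assoc] at hvol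
  rw [ENNReal.mul_le_mul_iff_left (measure_ball_pos μ 0 one_pos).ne' measure_ball_lt_top.ne,
    ← ENNReal.ofReal_natCast, ← ENNReal.ofReal_mul (by positivity),
    ENNReal.ofReal_le_ofReal_iff (by positivity), ← le_div_iff₀ (by positivity), ← div_pow] at hvol
  refine hvol.trans_eq (congrArg (· ^ _) ?_)
  field_simp
  ring

theorem exists_finset_isCover_sphere_card_le {ε : ℝ≥0} (hε : 0 < ε) :
    ∃ T : Finset E, (T : Set E) ⊆ sphere 0 1 ∧ IsCover ε (sphere 0 1) (T : Set E) ∧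
      (T.card : ℝ) ≤ (1 + 2 / ε) ^ finrank ℝ E := by
  have hpack := (isCompact_sphere (0 : E) 1).packingNumber_ne_top hε.ne'
  have hfin : (maximalSeparatedSet ε (sphere (0 : E) 1)).Finite :=
    Set.encard_ne_top_iff.1 ((encard_maximalSeparatedSet hpack).trans_ne hpack)
  refine ⟨hfin.toFinset, by simpa using maximalSeparatedSet_subset,
    by simpa using isCover_maximalSeparatedSet hpack, ?_⟩
  exact IsSeparated.card_le_of_subset_closedBall hε (by simpa using isSeparated_maximalSeparatedSet)
    (by simpa using maximalSeparatedSet_subset.trans sphere_subset_closedBall)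

end Packing

namespace ContinuousLinearMap

variable {𝕜 E : Type*} [RCLike 𝕜] [NormedAddCommGroup E] [InnerProductSpace 𝕜 E]

theorem norm_inner_apply_self_sub_le (T : E →L[𝕜] E) (x y : E) :
    ‖⟪T x, x⟫_𝕜 - ⟪T y, y⟫_𝕜‖ ≤ ‖T‖ * (‖x‖ + ‖y‖) * ‖x - y‖ := by
  have hsplit : ⟪T x, x⟫_𝕜 - ⟪T y, y⟫_𝕜 = ⟪T x, x - y⟫_𝕜 + ⟪T (x - y), y⟫_𝕜 := by
    simp only [inner_sub_left, inner_sub_right, map_sub]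
    ring
  calc ‖⟪T x, x⟫_𝕜 - ⟪T y, y⟫_𝕜‖ ≤ ‖T x‖ * ‖x - y‖ + ‖T (x - y)‖ * ‖y‖ := by
        rw [hsplit]
        exact (norm_add_le _ _).trans (add_le_add (norm_inner_le_norm _ _) (norm_inner_le_norm _ _))
    _ ≤ ‖T‖ * ‖x‖ * ‖x - y‖ + ‖T‖ * ‖x - y‖ * ‖y‖ := by gcongr <;> exact T.le_opNorm _
    _ = ‖T‖ * (‖x‖ + ‖y‖) * ‖x - y‖ := by ring

variable {T : E →L[𝕜] E} {ε : ℝ≥0} {N : Set E} {s : ℝ}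

theorem abs_re_inner_apply_self_le_of_isCover (hN₁ : N ⊆ closedBall 0 1)
    (hN : IsCover ε (sphere 0 1) N) (hs : ∀ y ∈ N, |re ⟪T y, y⟫_𝕜| ≤ s) {z : E} (hz : ‖z‖ = 1) :
    |re ⟪T z, z⟫_𝕜| ≤ s + 2 * ε * ‖T‖ := by
  obtain ⟨y, hy, hzy⟩ :=
    Set.mem_iUnion₂.1 (hN.subset_iUnion_closedBall (mem_sphere_zero_iff_norm.2 hz))
  rw [mem_closedBall, dist_eq_norm] at hzy
  have hdiff := (abs_re_le_norm _).trans (T.norm_inner_apply_self_sub_le z y)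
  rw [map_sub, hz] at hdiff
  calc |re ⟪T z, z⟫_𝕜| ≤ |re ⟪T y, y⟫_𝕜| + ‖T‖ * (1 + ‖y‖) * ‖z - y‖ := by
        linarith [abs_sub_abs_le_abs_sub (re ⟪T z, z⟫_𝕜) (re ⟪T y, y⟫_𝕜)]
    _ ≤ s + ‖T‖ * (1 + 1) * ε := by
        gcongr
        exacts [hs y hy, mem_closedBall_zero_iff.1 (hN₁ hy)]
    _ = s + 2 * ε * ‖T‖ := by ring

theorem one_sub_two_mul_norm_le_of_isCover [Nontrivial E] (hT : (T : E →ₗ[𝕜] E).IsSymmetric)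
    (hN₁ : N ⊆ closedBall 0 1) (hN : IsCover ε (sphere 0 1) N)
    (hs : ∀ y ∈ N, |re ⟪T y, y⟫_𝕜| ≤ s) :
    (1 - 2 * ε) * ‖T‖ ≤ s := by
  have hs₀ : 0 ≤ s := by
    let _ := InnerProductSpace.rclikeToReal 𝕜 E
    obtain ⟨y, hy⟩ := hN.nonempty (NormedSpace.sphere_nonempty.2 zero_le_one)
    exact (abs_nonneg _).trans (hs y hy)
  have hrayleigh : ∀ x, |T.rayleighQuotient x| ≤ s + 2 * ε * ‖T‖ := by
    intro x
    rcases eq_or_ne x 0 with rfl | hx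
    · simp only [rayleighQuotient_apply_zero, abs_zero]
      positivity
    have hx' : (‖x‖⁻¹ : 𝕜) ≠ 0 := by simpa using hx
    have hunit : ‖(‖x‖⁻¹ : 𝕜) • x‖ = 1 := norm_smul_inv_norm hx
    rw [← T.rayleigh_smul x hx', rayleighQuotient, reApplyInnerSelf_apply, hunit,
      one_pow, div_one]
    exact abs_re_inner_apply_self_le_of_isCover hN₁ hN hs hunit
  have := (T.norm_eq_iSup_rayleighQuotient hT).trans_le (ciSup_le hrayleigh)
  linarith

end ContinuousLinearMap

section Matrix

variable {m n : Type} [Fintype m] [Fintype n] [DecidableEq n]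

theorem Matrix.inner_toEuclideanLin_transpose_mul_self [DecidableEq m] (A : Matrix m n ℝ)
    (x : EuclideanSpace ℝ n) : ⟪toEuclideanLin (Aᵀ * A) x, x⟫_ℝ = ‖toEuclideanLin A x‖ ^ 2 := by
  rw [toLpLin_mul_same, LinearMap.comp_apply, ← conjTranspose_eq_transpose_of_trivial,
    toEuclideanLin_conjTranspose_eq_adjoint, LinearMap.adjoint_inner_left,
    real_inner_self_eq_norm_sq]

theorem Matrix.inner_toEuclideanLin_transpose_mul_self_sub_one [DecidableEq m] (A : Matrix m n ℝ)
    (x : EuclideanSpace ℝ n) :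
    ⟪toEuclideanLin (Aᵀ * A - 1) x, x⟫_ℝ = ‖toEuclideanLin A x‖ ^ 2 - ‖x‖ ^ 2 := by
  rw [map_sub, LinearMap.sub_apply, inner_sub_left, inner_toEuclideanLin_transpose_mul_self,
    toLpLin_one, LinearMap.id_apply, real_inner_self_eq_norm_sq]

theorem Matrix.isSymmetric_toEuclideanLin_transpose_mul_self_sub_one (A : Matrix m n ℝ) :
    (toEuclideanLin (Aᵀ * A - 1)).IsSymmetric := by
  rw [isSymmetric_toEuclideanLin_iff, ← conjTranspose_eq_transpose_of_trivial]
  exact (isHermitian_conjTranspose_mul_self A).sub isHermitian_one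

theorem Matrix.norm_toEuclideanLin_of_transpose_mul_self_eq_one [DecidableEq m] {U : Matrix m n ℝ}
    (hU : Uᵀ * U = 1) (x : EuclideanSpace ℝ n) : ‖toEuclideanLin U x‖ = ‖x‖ := by
  have h := inner_toEuclideanLin_transpose_mul_self U x
  rw [hU, toLpLin_one, LinearMap.id_apply, real_inner_self_eq_norm_sq] at h
  exact (pow_left_inj₀ (norm_nonneg _) (norm_nonneg _) two_ne_zero).1 h.symm

theorem opNorm_of_isEmpty [IsEmpty n] (A : Matrix m n ℝ) : opNorm A = 0 :=
  ContinuousLinearMap.opNorm_subsingleton _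

theorem one_sub_two_mul_opNorm_transpose_mul_self_sub_one_le [DecidableEq m] [Nonempty n]
    (A : Matrix m n ℝ) {ε : ℝ≥0} {N : Set (EuclideanSpace ℝ n)} (hN₁ : N ⊆ closedBall 0 1)
    (hN : IsCover ε (sphere 0 1) N) {s : ℝ}
    (hs : ∀ y ∈ N, |‖toEuclideanLin A y‖ ^ 2 - ‖y‖ ^ 2| ≤ s) :
    (1 - 2 * ε) * opNorm (Aᵀ * A - 1) ≤ s := by
  refine ContinuousLinearMap.one_sub_two_mul_norm_le_of_isCover ?_ hN₁ hN fun y hy ↦ ?_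
  · rw [LinearMap.coe_toContinuousLinearMap]
    exact isSymmetric_toEuclideanLin_transpose_mul_self_sub_one A
  · rw [LinearMap.coe_toContinuousLinearMap', re_to_real,
      inner_toEuclideanLin_transpose_mul_self_sub_one]
    exact hs y hy

end Matrix

/-- a net of size at most `9^d` suffices to control
`‖(ΠU)ᵀ(ΠU) − I‖` by twice the worst JL distortion over the net. -/
theorem stmt7 {n d : ℕ} (U : Matrix (Fin n) (Fin d) ℝ) (hU : Uᵀ * U = 1) :
    ∃ X : Finset (EuclideanSpace ℝ (Fin n)), X.card ≤ 9 ^ d ∧ (∀ x ∈ X, ‖x‖ ≤ 1) ∧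
      ∀ (m : ℕ) (Φ : Matrix (Fin m) (Fin n) ℝ) (s : ℝ),
        (∀ x ∈ X, |‖Matrix.toEuclideanLin Φ x‖ ^ 2 - 1| ≤ s) →
        opNorm ((Φ * U)ᵀ * (Φ * U) - 1) ≤ 2 * s := by
  rcases isEmpty_or_nonempty (Fin d) with hd | hd
  · -- the sphere of `ℝ⁰` is empty, but the point `0` still forces `1 ≤ s`
    refine ⟨{0}, by simpa using Nat.one_le_pow d 9 (by norm_num), by simp, fun m Φ s hs ↦ ?_⟩
    have h1 := hs 0 (Finset.mem_singleton_self _)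
    norm_num at h1
    rw [opNorm_of_isEmpty]
    linarith
  obtain ⟨T, hTS, hTcover, hTcard⟩ :=
    exists_finset_isCover_sphere_card_le (E := EuclideanSpace ℝ (Fin d)) (ε := 1 / 4) (by norm_num)
  have hε : ((1 / 4 : ℝ≥0) : ℝ) = 1 / 4 := by norm_num
  refine ⟨T.image (toEuclideanLin U), Finset.card_image_le.trans ?_, ?_, fun m Φ s hs ↦ ?_⟩
  · rw [hε, finrank_euclideanSpace_fin] at hTcard
    norm_num at hTcard
    exact_mod_cast hTcard
  · simp only [Finset.forall_mem_image, norm_toEuclideanLin_of_transpose_mul_self_eq_one hU]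
    exact fun y hy ↦ (mem_sphere_zero_iff_norm.1 (hTS hy)).le
  have h := one_sub_two_mul_opNorm_transpose_mul_self_sub_one_le (Φ * U)
    (hTS.trans sphere_subset_closedBall) hTcover (s := s) fun y hy ↦ by
      rw [toLpLin_mul_same, LinearMap.comp_apply, mem_sphere_zero_iff_norm.1 (hTS hy), one_pow]
      exact hs _ (Finset.mem_image_of_mem _ hy)
  rw [hε] at h
  linarith
end

section
/- Suppose Theorem BSS-stable holds: for every matrix X with ‖X‖² ≤ 1 and ‖X‖_F² ≤ k and ε ∈ (0,1), there is a diagonal S with O(k/ε²) nonzero entries satisfying ‖(SX)ᵀ(SX) − XᵀX‖ ≤ ε. Then for any two matrices A, B with n rows, there is a diagonal S with O(k/ε²) nonzero entries such that ‖(SA)ᵀ(SB) − AᵀB‖ ≤ 4ε·max(‖A‖, ‖A‖_F/√k)·max(‖B‖, ‖B‖_F/√k); in particular S satisfies the (k, O(ε))-AMM property for A, B. -/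
/-! Rescale `A` and `B` by twice their stable scales `max (‖·‖, ‖·‖_F / √k)` and place them side
by side, `X = [A' B']`. Since `‖X‖² = ‖A'A'ᴴ + B'B'ᴴ‖ ≤ ‖A'‖² + ‖B'‖² ≤ 1/2` and
`‖X‖_F² = ‖A'‖_F² + ‖B'‖_F² ≤ k/2`, the BSS hypothesis yields a sparse diagonal `S` with
`‖(SX)ᵀ(SX) - XᵀX‖ ≤ ε`. The off-diagonal block of that matrix is `(SA')ᵀ(SB') - A'ᵀB'`, a
submatrix has no larger operator norm, and undoing the rescaling costs the factor
`4 · scale A · scale B`. -/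

open Matrix MeasureTheory

/- Under this instance `‖A‖` is definitionally `opNorm A`: everything below is stated with `‖·‖`
and applies verbatim to the `opNorm` of the theorem. -/
open scoped Matrix.Norms.L2Operator

namespace Matrix

variable {𝕜 l m n o : Type*} [RCLike 𝕜] [Fintype l] [Fintype m] [Fintype n] [Fintype o]

lemma l2_opNorm_one_submatrix_le [DecidableEq m] (f : l → m) (hf : Function.Injective f) :
    ‖(1 : Matrix m m 𝕜).submatrix f id‖ ≤ 1 := by
  classical
  set P := (1 : Matrix m m 𝕜).submatrix f id
  have hP : P * Pᴴ = 1 := by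
    rw [conjTranspose_submatrix, conjTranspose_one, ← submatrix_mul _ _ _ _ _ Function.bijective_id,
      Matrix.one_mul, submatrix_one f hf]
  have hnorm : ‖P‖ * ‖P‖ = ‖(1 : Matrix l l 𝕜)‖ := by
    rw [← hP, ← l2_opNorm_conjTranspose P, ← l2_opNorm_conjTranspose_mul_self,
      conjTranspose_conjTranspose]
  have hone : ‖(1 : Matrix l l 𝕜)‖ ≤ 1 := by
    rw [← diagonal_one, l2_opNorm_diagonal]
    exact pi_norm_le_iff_of_nonneg zero_le_one |>.2 fun _ => by simp
  nlinarith [norm_nonneg P]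

lemma l2_opNorm_submatrix_id_le [DecidableEq m] [DecidableEq n] (M : Matrix m n 𝕜) {f : l → m}
    (hf : Function.Injective f) : ‖M.submatrix f id‖ ≤ ‖M‖ :=
  calc ‖M.submatrix f id‖ = ‖(1 : Matrix m m 𝕜).submatrix f (Equiv.refl m) * M‖ := by
        rw [one_submatrix_mul]; rfl
    _ ≤ ‖(1 : Matrix m m 𝕜).submatrix f (Equiv.refl m)‖ * ‖M‖ := l2_opNorm_mul _ _
    _ ≤ 1 * ‖M‖ := by gcongr; exact l2_opNorm_one_submatrix_le f hf
    _ = ‖M‖ := one_mul _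

lemma l2_opNorm_submatrix_le [DecidableEq l] [DecidableEq m] [DecidableEq n] [DecidableEq o]
    (M : Matrix m n 𝕜) {f : l → m} {g : o → n} (hf : Function.Injective f)
    (hg : Function.Injective g) : ‖M.submatrix f g‖ ≤ ‖M‖ :=
  calc ‖M.submatrix f g‖ = ‖((M.submatrix f id)ᴴ.submatrix g id)ᴴ‖ := by
        rw [conjTranspose_submatrix, conjTranspose_conjTranspose, submatrix_submatrix]; rfl
    _ = ‖(M.submatrix f id)ᴴ.submatrix g id‖ := l2_opNorm_conjTranspose _
    _ ≤ ‖(M.submatrix f id)ᴴ‖ := l2_opNorm_submatrix_id_le _ hg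
    _ = ‖M.submatrix f id‖ := l2_opNorm_conjTranspose _
    _ ≤ ‖M‖ := l2_opNorm_submatrix_id_le M hf

lemma l2_opNorm_toBlocks₁₂_le [DecidableEq l] [DecidableEq m] [DecidableEq n] [DecidableEq o]
    (M : Matrix (l ⊕ m) (n ⊕ o) 𝕜) : ‖M.toBlocks₁₂‖ ≤ ‖M‖ :=
  l2_opNorm_submatrix_le M Sum.inl_injective Sum.inr_injective

lemma l2_opNorm_sq_eq_mul_conjTranspose [DecidableEq m] [DecidableEq n] (A : Matrix m n 𝕜) :
    ‖A‖ ^ 2 = ‖A * Aᴴ‖ := by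
  rw [← l2_opNorm_conjTranspose A, sq, ← l2_opNorm_conjTranspose_mul_self,
    conjTranspose_conjTranspose]

lemma l2_opNorm_fromCols_sq_le [DecidableEq l] [DecidableEq m] [DecidableEq n]
    (A : Matrix l m 𝕜) (B : Matrix l n 𝕜) : ‖fromCols A B‖ ^ 2 ≤ ‖A‖ ^ 2 + ‖B‖ ^ 2 :=
  calc ‖fromCols A B‖ ^ 2 = ‖A * Aᴴ + B * Bᴴ‖ := by
        rw [l2_opNorm_sq_eq_mul_conjTranspose, conjTranspose_fromCols_eq_fromRows_conjTranspose,
          fromCols_mul_fromRows]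
    _ ≤ ‖A * Aᴴ‖ + ‖B * Bᴴ‖ := norm_add_le _ _
    _ = ‖A‖ ^ 2 + ‖B‖ ^ 2 := by
        rw [l2_opNorm_sq_eq_mul_conjTranspose, l2_opNorm_sq_eq_mul_conjTranspose]

end Matrix

section Frobenius

variable {α β γ : Type} [Fintype α] [Fintype β] [Fintype γ]

lemma frobNorm_nonneg (A : Matrix α β ℝ) : 0 ≤ frobNorm A := Real.sqrt_nonneg _

lemma frobNorm_smul (c : ℝ) (A : Matrix α β ℝ) : frobNorm (c • A) = |c| * frobNorm A := by
  rw [frobNorm, frobNorm, ← Real.sqrt_sq_eq_abs, ← Real.sqrt_mul (sq_nonneg c)]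
  simp only [Matrix.smul_apply, smul_eq_mul, mul_pow, Finset.mul_sum]

lemma frobNorm_fromCols_sq (A : Matrix α β ℝ) (B : Matrix α γ ℝ) :
    frobNorm (fromCols A B) ^ 2 = frobNorm A ^ 2 + frobNorm B ^ 2 := by
  have hsq : ∀ {δ : Type} [Fintype δ] (X : Matrix α δ ℝ), frobNorm X ^ 2 = ∑ i, ∑ j, X i j ^ 2 :=
    fun _ => Real.sq_sqrt <| Finset.sum_nonneg fun _ _ => Finset.sum_nonneg fun _ _ => sq_nonneg _
  simp only [hsq, Fintype.sum_sum_type, fromCols_apply_inl, fromCols_apply_inr,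
    Finset.sum_add_distrib]

lemma frobNorm_submatrix_equiv (A : Matrix α β ℝ) (e : γ ≃ β) :
    frobNorm (A.submatrix id e) = frobNorm A :=
  congrArg Real.sqrt <| Finset.sum_congr rfl fun i _ => e.sum_comp fun j => A i j ^ 2

end Frobenius

def ammError {m α β : Type} [Fintype m] [DecidableEq m] (d : m → ℝ) (A : Matrix m α ℝ)
    (B : Matrix m β ℝ) : Matrix α β ℝ :=
  (diagonal d * A)ᵀ * (diagonal d * B) - Aᵀ * B

section ammError

variable {m α β γ δ : Type} [Fintype m] [DecidableEq m] (d : m → ℝ)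

@[simp]
lemma ammError_zero_left (B : Matrix m β ℝ) : ammError d (0 : Matrix m α ℝ) B = 0 := by
  simp [ammError]

@[simp]
lemma ammError_zero_right (A : Matrix m α ℝ) : ammError d A (0 : Matrix m β ℝ) = 0 := by
  simp [ammError]

lemma ammError_smul_smul (a b : ℝ) (A : Matrix m α ℝ) (B : Matrix m β ℝ) :
    ammError d (a • A) (b • B) = (a * b) • ammError d A B := by
  simp only [ammError, Matrix.mul_smul, transpose_smul, Matrix.smul_mul, smul_smul, smul_sub,
    mul_comm b a]

lemma ammError_submatrix (A : Matrix m α ℝ) (B : Matrix m β ℝ) (f : γ → α) (g : δ → β) :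
    ammError d (A.submatrix id f) (B.submatrix id g) = (ammError d A B).submatrix f g := by
  ext i j
  simp [ammError, mul_apply]

lemma toBlocks₁₂_ammError_fromCols (A : Matrix m α ℝ) (B : Matrix m β ℝ) :
    (ammError d (fromCols A B) (fromCols A B)).toBlocks₁₂ = ammError d A B := by
  rw [ammError, mul_fromCols, transpose_fromCols, transpose_fromCols, fromRows_mul_fromCols,
    fromRows_mul_fromCols]
  rfl

variable [Fintype α] [Fintype β] [DecidableEq α] [DecidableEq β]

lemma l2_opNorm_ammError_le_of_inv_smul {a b ε : ℝ} {A : Matrix m α ℝ} {B : Matrix m β ℝ}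
    (hA : ‖A‖ ≤ a) (hB : ‖B‖ ≤ b) (h : ‖ammError d (a⁻¹ • A) (b⁻¹ • B)‖ ≤ ε) :
    ‖ammError d A B‖ ≤ a * b * ε := by
  rcases ((norm_nonneg A).trans hA).eq_or_lt with rfl | ha
  · simp [norm_le_zero_iff.1 hA]
  rcases ((norm_nonneg B).trans hB).eq_or_lt with rfl | hb
  · simp [norm_le_zero_iff.1 hB]
  calc ‖ammError d A B‖ = ‖ammError d (a • a⁻¹ • A) (b • b⁻¹ • B)‖ := by
        rw [smul_inv_smul₀ ha.ne', smul_inv_smul₀ hb.ne']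
    _ = a * b * ‖ammError d (a⁻¹ • A) (b⁻¹ • B)‖ := by
        rw [ammError_smul_smul, norm_smul, Real.norm_of_nonneg (by positivity)]
    _ ≤ a * b * ε := by gcongr

end ammError

noncomputable def stableScale {m α : Type} [Fintype m] [Fintype α] [DecidableEq α] (k : ℝ)
    (A : Matrix m α ℝ) : ℝ :=
  max ‖A‖ (frobNorm A / Real.sqrt k)

section stableScale

variable {m α : Type} [Fintype m] [Fintype α] [DecidableEq α] {k : ℝ}

lemma inv_two_mul_mul_self_le (x : ℝ) : (2 * x)⁻¹ * x ≤ 1 / 2 := by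
  rcases eq_or_ne x 0 with rfl | hx
  · norm_num
  · rw [mul_inv, mul_assoc, inv_mul_cancel₀ hx]; norm_num

lemma l2_opNorm_le_stableScale (A : Matrix m α ℝ) : ‖A‖ ≤ stableScale k A := le_max_left _ _

lemma stableScale_nonneg (A : Matrix m α ℝ) : 0 ≤ stableScale k A :=
  (norm_nonneg A).trans (l2_opNorm_le_stableScale A)

lemma frobNorm_le_stableScale_mul (hk : 0 < k) (A : Matrix m α ℝ) :
    frobNorm A ≤ stableScale k A * Real.sqrt k :=
  (div_le_iff₀ (Real.sqrt_pos.2 hk)).1 (le_max_right _ _)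

lemma l2_opNorm_normalize_le (A : Matrix m α ℝ) :
    ‖(2 * stableScale k A)⁻¹ • A‖ ≤ 1 / 2 := by
  have hc : 0 ≤ (2 * stableScale k A)⁻¹ := by have := stableScale_nonneg (k := k) A; positivity
  calc ‖(2 * stableScale k A)⁻¹ • A‖ = (2 * stableScale k A)⁻¹ * ‖A‖ := by
        rw [norm_smul, Real.norm_of_nonneg hc]
    _ ≤ (2 * stableScale k A)⁻¹ * stableScale k A := by gcongr; exact l2_opNorm_le_stableScale A
    _ ≤ 1 / 2 := inv_two_mul_mul_self_le _

lemma frobNorm_normalize_le (hk : 0 < k) (A : Matrix m α ℝ) :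
    frobNorm ((2 * stableScale k A)⁻¹ • A) ≤ Real.sqrt k / 2 := by
  have hc : 0 ≤ (2 * stableScale k A)⁻¹ := by have := stableScale_nonneg (k := k) A; positivity
  calc frobNorm ((2 * stableScale k A)⁻¹ • A) = (2 * stableScale k A)⁻¹ * frobNorm A := by
        rw [frobNorm_smul, abs_of_nonneg hc]
    _ ≤ (2 * stableScale k A)⁻¹ * (stableScale k A * Real.sqrt k) := by
        gcongr; exact frobNorm_le_stableScale_mul hk A
    _ ≤ 1 / 2 * Real.sqrt k := by
        rw [← mul_assoc]; gcongr; exact inv_two_mul_mul_self_le _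
    _ = Real.sqrt k / 2 := by ring

end stableScale

def HasSparseGramApprox (m ι : Type) [Fintype m] [DecidableEq m] [Fintype ι] [DecidableEq ι]
    (k C : ℝ) : Prop :=
  ∀ X : Matrix m ι ℝ, ‖X‖ ^ 2 ≤ 1 → frobNorm X ^ 2 ≤ k →
    ∀ ε : ℝ, 0 < ε → ε < 1 →
      ∃ d : m → ℝ, ((Finset.univ.filter fun i => d i ≠ 0).card : ℝ) ≤ C * k / ε ^ 2 ∧
        ‖ammError d X X‖ ≤ ε

namespace HasSparseGramApprox

variable {m ι ι' α β : Type} [Fintype m] [DecidableEq m] [Fintype ι] [DecidableEq ι]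
  [Fintype ι'] [DecidableEq ι'] [Fintype α] [DecidableEq α] [Fintype β] [DecidableEq β] {k C : ℝ}

theorem of_equiv (h : HasSparseGramApprox m ι' k C) (e : ι ≃ ι') : HasSparseGramApprox m ι k C := by
  intro X hX hXF ε hε hε1
  set Y := X.submatrix id e.symm
  have hY : ‖Y‖ ^ 2 ≤ 1 := (pow_le_pow_left₀ (norm_nonneg _)
    (l2_opNorm_submatrix_le X Function.injective_id e.symm.injective) 2).trans hX
  have hYF : frobNorm Y ^ 2 ≤ k := by rwa [frobNorm_submatrix_equiv]
  obtain ⟨d, hcard, herr⟩ := h Y hY hYF ε hε hε1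
  refine ⟨d, hcard, ?_⟩
  calc ‖ammError d X X‖ = ‖(ammError d Y Y).submatrix e e‖ := by
        rw [← ammError_submatrix, submatrix_submatrix]; simp
    _ ≤ ‖ammError d Y Y‖ := l2_opNorm_submatrix_le _ e.injective e.injective
    _ ≤ ε := herr

theorem exists_l2_opNorm_ammError_le (h : HasSparseGramApprox m (α ⊕ β) k C) (hk : 0 < k)
    (A : Matrix m α ℝ) (B : Matrix m β ℝ) {ε : ℝ} (hε : 0 < ε) (hε1 : ε < 1) :
    ∃ d : m → ℝ, ((Finset.univ.filter fun i => d i ≠ 0).card : ℝ) ≤ C * k / ε ^ 2 ∧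
      ‖ammError d A B‖ ≤ 4 * ε * stableScale k A * stableScale k B := by
  set a := 2 * stableScale k A
  set b := 2 * stableScale k B
  set X := fromCols (a⁻¹ • A) (b⁻¹ • B)
  have hX : ‖X‖ ^ 2 ≤ 1 :=
    calc ‖X‖ ^ 2 ≤ ‖a⁻¹ • A‖ ^ 2 + ‖b⁻¹ • B‖ ^ 2 := l2_opNorm_fromCols_sq_le _ _
      _ ≤ (1 / 2) ^ 2 + (1 / 2) ^ 2 :=
          add_le_add (pow_le_pow_left₀ (norm_nonneg _) (l2_opNorm_normalize_le A) 2)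
            (pow_le_pow_left₀ (norm_nonneg _) (l2_opNorm_normalize_le B) 2)
      _ ≤ 1 := by norm_num
  have hXF : frobNorm X ^ 2 ≤ k :=
    calc frobNorm X ^ 2 = frobNorm (a⁻¹ • A) ^ 2 + frobNorm (b⁻¹ • B) ^ 2 :=
          frobNorm_fromCols_sq _ _
      _ ≤ (Real.sqrt k / 2) ^ 2 + (Real.sqrt k / 2) ^ 2 :=
          add_le_add (pow_le_pow_left₀ (frobNorm_nonneg _) (frobNorm_normalize_le hk A) 2)
            (pow_le_pow_left₀ (frobNorm_nonneg _) (frobNorm_normalize_le hk B) 2)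
      _ ≤ k := by rw [div_pow, Real.sq_sqrt hk.le]; linarith
  obtain ⟨d, hcard, herr⟩ := h X hX hXF ε hε hε1
  refine ⟨d, hcard, ?_⟩
  have hblock : ‖ammError d (a⁻¹ • A) (b⁻¹ • B)‖ ≤ ε := by
    rw [← toBlocks₁₂_ammError_fromCols]
    exact (l2_opNorm_toBlocks₁₂_le _).trans herr
  calc ‖ammError d A B‖ ≤ a * b * ε := by
        refine l2_opNorm_ammError_le_of_inv_smul d ?_ ?_ hblock
        · linarith [l2_opNorm_le_stableScale (k := k) A, stableScale_nonneg (k := k) A]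
        · linarith [l2_opNorm_le_stableScale (k := k) B, stableScale_nonneg (k := k) B]
    _ = 4 * ε * stableScale k A * stableScale k B := by ring

end HasSparseGramApprox

/-- given the stable-rank BSS theorem (with sparsity constant `C`), for any two
matrices `A, B` with `n` rows there is a deterministic diagonal sampling matrix with
`O(k/ε²)` nonzero entries achieving spectral-norm AMM with stable-rank-type error. -/
theorem stmt17 {n : ℕ} (k : ℝ) (hk : 0 < k) (C : ℝ)
    (hBSS : ∀ (dX : ℕ) (X : Matrix (Fin n) (Fin dX) ℝ),
      opNorm X ^ 2 ≤ 1 → frobNorm X ^ 2 ≤ k →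
      ∀ ε : ℝ, 0 < ε → ε < 1 →
        ∃ dv : Fin n → ℝ,
          ((Finset.univ.filter fun i => dv i ≠ 0).card : ℝ) ≤ C * k / ε ^ 2 ∧
          opNorm ((Matrix.diagonal dv * X)ᵀ * (Matrix.diagonal dv * X) - Xᵀ * X) ≤ ε) :
    ∃ C' : ℝ, ∀ (dA dB : ℕ) (A : Matrix (Fin n) (Fin dA) ℝ) (B : Matrix (Fin n) (Fin dB) ℝ)
        (ε : ℝ), 0 < ε → ε < 1 →
      ∃ dv : Fin n → ℝ,
        ((Finset.univ.filter fun i => dv i ≠ 0).card : ℝ) ≤ C' * k / ε ^ 2 ∧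
        opNorm ((Matrix.diagonal dv * A)ᵀ * (Matrix.diagonal dv * B) - Aᵀ * B) ≤
          4 * ε * max (opNorm A) (frobNorm A / Real.sqrt k) *
            max (opNorm B) (frobNorm B / Real.sqrt k) := by
  refine ⟨C, fun dA dB A B ε hε hε1 => ?_⟩
  have hsum : HasSparseGramApprox (Fin n) (Fin dA ⊕ Fin dB) k C :=
    HasSparseGramApprox.of_equiv (hBSS (dA + dB)) finSumFinEquiv
  exact hsum.exists_l2_opNorm_ammError_le hk A B hε hε1
end

section
/- Let Z, X_u be symmetric d×d matrices with Z ≺ X_u, let A ∈ R^{n×d}, let a be a row of A (as a column vector), and let t > 0 and δ_u > 0. Set M_u = ((X_u + δ_u AᵀA) − Z)^{-1} and assume X_u + δ_u AᵀA − Z ≻ 0 and 1/t ≥ aᵀM_u AᵀA M_u a / (δ_u · tr(A M_u AᵀA M_u Aᵀ)) + aᵀM_u a. Then tr(A((X_u + δ_u AᵀA) − (Z + t a aᵀ))^{-1} Aᵀ) ≤ tr(A(X_u − Z)^{-1} Aᵀ), i.e., the upper barrier potential does not increase after the step. -/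
/-!
Write `W = Xᵤ - Z`, `C = δᵤ AᵀA`, `N = W + C`, `M = N⁻¹` and `w = A M a`. By Sherman–Morrison,
`tr (A (N - t aaᵀ)⁻¹ Aᵀ) = tr (A M Aᵀ) + t ‖w‖² / (1 - t aᵀMa)`, and the step condition bounds the
gain by `δᵤ tr (A M AᵀA M Aᵀ)`. The denominator is positive: since `a` is the `i`-th row of `A`,
`aᵀMa = wᵢ`, so `(aᵀMa)² ≤ ‖w‖² ≤ tr (A M AᵀA M Aᵀ)`, and `1 - t aᵀMa ≤ 0` would force `w = 0`,
hence `aᵀMa = 0`.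
Finally the resolvent expansion `W⁻¹ = M + M C M + M C W⁻¹ C M`, whose last term is positive
semidefinite, gives `tr (A M Aᵀ) + δᵤ tr (A M AᵀA M Aᵀ) ≤ tr (A W⁻¹ Aᵀ)`: the tangent-line
inequality for the convex map `y ↦ tr (A (W + y AᵀA)⁻¹ Aᵀ)` at `y = δᵤ`.
-/

open Matrix
open scoped ComplexOrder

namespace Matrix

variable {ι m K : Type*} [Fintype ι]

section Inverse

variable [DecidableEq ι]

theorem inv_add_vecMulVec [Field K] {N : Matrix ι ι K} (hN : IsUnit N.det) (u v : ι → K)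
    (h : 1 + v ⬝ᵥ N⁻¹ *ᵥ u ≠ 0) :
    (N + vecMulVec u v)⁻¹ =
      N⁻¹ - (1 + v ⬝ᵥ N⁻¹ *ᵥ u)⁻¹ • vecMulVec (N⁻¹ *ᵥ u) (v ᵥ* N⁻¹) := by
  apply inv_eq_right_inv
  have hNu : (N + vecMulVec u v) *ᵥ (N⁻¹ *ᵥ u) = (1 + v ⬝ᵥ N⁻¹ *ᵥ u) • u := by
    rw [add_mulVec, mulVec_mulVec, mul_nonsing_inv N hN, one_mulVec, vecMulVec_mulVec,
      add_smul, one_smul, op_smul_eq_smul]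
  rw [Matrix.mul_sub, Matrix.mul_smul, mul_vecMulVec, hNu, smul_vecMulVec, smul_smul,
    inv_mul_cancel₀ h, one_smul, Matrix.add_mul, mul_nonsing_inv N hN, vecMulVec_mul,
    add_sub_cancel_right]

theorem inv_eq_inv_add_second_order [CommRing K] {W C : Matrix ι ι K} (hW : IsUnit W.det)
    (hWC : IsUnit (W + C).det) :
    W⁻¹ = (W + C)⁻¹ + (W + C)⁻¹ * C * (W + C)⁻¹ + (W + C)⁻¹ * C * W⁻¹ * C * (W + C)⁻¹ := by
  set M := (W + C)⁻¹
  have left : W⁻¹ = M + M * C * W⁻¹ := by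
    calc W⁻¹ = M * (W + C) * W⁻¹ := by rw [nonsing_inv_mul _ hWC, Matrix.one_mul]
      _ = M + M * C * W⁻¹ := by
        rw [Matrix.mul_add, Matrix.add_mul, Matrix.mul_assoc, mul_nonsing_inv _ hW,
          Matrix.mul_one]
  have right : W⁻¹ = M + W⁻¹ * C * M := by
    calc W⁻¹ = W⁻¹ * (W + C) * M := by
          rw [Matrix.mul_assoc, mul_nonsing_inv _ hWC, Matrix.mul_one]
      _ = M + W⁻¹ * C * M := by
        rw [Matrix.mul_add, Matrix.add_mul, nonsing_inv_mul _ hW, Matrix.one_mul]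
  calc W⁻¹ = M + M * C * W⁻¹ := left
    _ = _ := by
      conv_lhs => rw [right]
      simp only [Matrix.mul_add, Matrix.mul_assoc, add_assoc]

theorem PosDef.posSemidef_inv_sub_inv_add_sub [RCLike K] {W C : Matrix ι ι K} (hW : W.PosDef)
    (hC : C.IsHermitian) (hWC : IsUnit (W + C).det) :
    (W⁻¹ - ((W + C)⁻¹ + (W + C)⁻¹ * C * (W + C)⁻¹)).PosSemidef := by
  have hM : ((W + C)⁻¹)ᴴ = (W + C)⁻¹ := (hW.isHermitian.add hC).inv.eq
  have hrem := hW.inv.posSemidef.conjTranspose_mul_mul_same (C * (W + C)⁻¹)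
  rw [conjTranspose_mul, hM, hC.eq] at hrem
  rw [inv_eq_inv_add_second_order (W.isUnit_iff_isUnit_det.mp hW.isUnit) hWC, add_sub_cancel_left]
  simpa only [Matrix.mul_assoc] using hrem

variable [Fintype m]

theorem trace_mul_inv_mul_transpose_add_le {W C : Matrix ι ι ℝ} (hW : W.PosDef)
    (hC : C.IsHermitian) (hWC : IsUnit (W + C).det) (A : Matrix m ι ℝ) :
    (A * (W + C)⁻¹ * Aᵀ).trace + (A * (W + C)⁻¹ * C * (W + C)⁻¹ * Aᵀ).trace ≤
      (A * W⁻¹ * Aᵀ).trace := by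
  have h := ((hW.posSemidef_inv_sub_inv_add_sub hC hWC).mul_mul_conjTranspose_same A).trace_nonneg
  rw [conjTranspose_eq_transpose_of_trivial, Matrix.mul_sub, Matrix.sub_mul, trace_sub,
    Matrix.mul_add, Matrix.add_mul, trace_add] at h
  simpa only [Matrix.mul_assoc, sub_nonneg] using h

theorem trace_mul_inv_sub_smul_vecMulVec_self_mul_transpose {N : Matrix ι ι ℝ}
    (hN : N.IsHermitian) (hNdet : IsUnit N.det) (A : Matrix m ι ℝ) (a : ι → ℝ) (t : ℝ)
    (hs : 1 - t * (a ⬝ᵥ N⁻¹ *ᵥ a) ≠ 0) :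
    (A * (N - t • vecMulVec a a)⁻¹ * Aᵀ).trace =
      (A * N⁻¹ * Aᵀ).trace +
        t / (1 - t * (a ⬝ᵥ N⁻¹ *ᵥ a)) * (A *ᵥ N⁻¹ *ᵥ a) ⬝ᵥ (A *ᵥ N⁻¹ *ᵥ a) := by
  have hsub : N - t • vecMulVec a a = N + vecMulVec (-t • a) a := by
    rw [smul_vecMulVec, neg_smul, sub_eq_add_neg]
  have hden : 1 + a ⬝ᵥ N⁻¹ *ᵥ (-t • a) = 1 - t * (a ⬝ᵥ N⁻¹ *ᵥ a) := by
    rw [mulVec_smul, dotProduct_smul, smul_eq_mul, neg_mul, ← sub_eq_add_neg]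
  have hsymm : a ᵥ* N⁻¹ = N⁻¹ *ᵥ a := by
    rw [← mulVec_transpose, ← conjTranspose_eq_transpose_of_trivial, hN.inv.eq]
  rw [hsub, inv_add_vecMulVec hNdet _ _ (hden ▸ hs), hden, hsymm, Matrix.mul_sub, Matrix.sub_mul,
    trace_sub, Matrix.mul_smul, Matrix.smul_mul, trace_smul, mul_vecMulVec, vecMulVec_mul,
    vecMul_transpose, trace_vecMulVec, mulVec_smul, mulVec_smul, smul_dotProduct, smul_eq_mul,
    smul_eq_mul]
  ring

end Inverse

variable [Fintype m]

theorem trace_mul_mul_transpose_eq_sum (A : Matrix m ι ℝ) (P : Matrix ι ι ℝ) :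
    (A * P * Aᵀ).trace = ∑ j, A j ⬝ᵥ P *ᵥ A j := by
  refine Finset.sum_congr rfl fun j _ => ?_
  rw [dotProduct_mulVec]
  rfl

theorem PosSemidef.row_dotProduct_mulVec_le_trace {P : Matrix ι ι ℝ} (hP : P.PosSemidef)
    (A : Matrix m ι ℝ) (i : m) :
    A i ⬝ᵥ P *ᵥ A i ≤ (A * P * Aᵀ).trace := by
  rw [trace_mul_mul_transpose_eq_sum]
  exact Finset.single_le_sum (fun j _ => hP.dotProduct_mulVec_nonneg (A j)) (Finset.mem_univ i)

theorem IsHermitian.dotProduct_mul_transpose_mul_mul_mulVec {M : Matrix ι ι ℝ}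
    (hM : M.IsHermitian) (A : Matrix m ι ℝ) (a : ι → ℝ) :
    a ⬝ᵥ (M * (Aᵀ * A) * M) *ᵥ a = (A *ᵥ M *ᵥ a) ⬝ᵥ (A *ᵥ M *ᵥ a) := by
  have hMM : M * (Aᵀ * A) * M = (A * M)ᵀ * (A * M) := by
    rw [transpose_mul, ← conjTranspose_eq_transpose_of_trivial M, hM.eq]
    simp only [Matrix.mul_assoc]
  rw [hMM, ← mulVec_mulVec, dotProduct_mulVec, vecMul_transpose, ← mulVec_mulVec]

theorem IsHermitian.dotProduct_mulVec_row_le_trace {M : Matrix ι ι ℝ} (hM : M.IsHermitian)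
    (A : Matrix m ι ℝ) (i : m) :
    (A *ᵥ M *ᵥ A i) ⬝ᵥ (A *ᵥ M *ᵥ A i) ≤ (A * M * (Aᵀ * A) * M * Aᵀ).trace := by
  have hP := (posSemidef_conjTranspose_mul_self A).conjTranspose_mul_mul_same M
  rw [hM.eq, conjTranspose_eq_transpose_of_trivial] at hP
  rw [← hM.dotProduct_mul_transpose_mul_mul_mulVec]
  simpa only [Matrix.mul_assoc] using hP.row_dotProduct_mulVec_le_trace A i

theorem sq_apply_le_dotProduct_self (w : ι → ℝ) (i : ι) : w i ^ 2 ≤ w ⬝ᵥ w :=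
  (sq _).trans_le (Finset.single_le_sum (fun j _ => mul_self_nonneg (w j)) (Finset.mem_univ i))

end Matrix

theorem one_sub_mul_pos_and_div_mul_le {t δ q c T : ℝ} (ht : 0 < t) (hδ : 0 < δ)
    (hqc : q ^ 2 ≤ c) (hcT : c ≤ T) (hstep : 1 / t ≥ c / (δ * T) + q) :
    0 < 1 - t * q ∧ t / (1 - t * q) * c ≤ δ * T := by
  have hc : 0 ≤ c := (sq_nonneg q).trans hqc
  rcases (hc.trans hcT).eq_or_lt with hT | hT
  · have hc0 : c = 0 := by linarith
    have hq0 : q = 0 := by nlinarith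
    simp [hc0, hq0, ← hT]
  · have hδT : 0 < δ * T := mul_pos hδ hT
    have hgain : t * c ≤ δ * T * (1 - t * q) := by
      have h := (div_le_iff₀ hδT).mp (le_sub_iff_add_le.mpr hstep)
      calc t * c ≤ t * ((1 / t - q) * (δ * T)) := by gcongr
        _ = δ * T * (1 - t * q) := by field_simp
    have hs : 0 < 1 - t * q := by
      by_contra! hs
      have hc0 : c = 0 := by nlinarith
      have hq0 : q = 0 := by nlinarith
      norm_num [hq0] at hs
    refine ⟨hs, ?_⟩
    rw [div_mul_eq_mul_div, div_le_iff₀ hs]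
    linarith

theorem stmt18_general {n d : ℕ} (Z Xu : Matrix (Fin d) (Fin d) ℝ)
    (A : Matrix (Fin n) (Fin d) ℝ) (a : Fin d → ℝ) (ha : ∃ i : Fin n, a = fun j => A i j)
    (t δu : ℝ) (ht : 0 < t) (hδu : 0 < δu)
    (hPD : (Xu - Z).PosDef)
    (hPD' : (Xu + δu • (Aᵀ * A) - Z).PosDef)
    (Mu : Matrix (Fin d) (Fin d) ℝ) (hMu : Mu = (Xu + δu • (Aᵀ * A) - Z)⁻¹)
    (hstep : 1 / t ≥
        (a ⬝ᵥ (Mu * (Aᵀ * A) * Mu).mulVec a) /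
          (δu * Matrix.trace (A * Mu * (Aᵀ * A) * Mu * Aᵀ)) +
        a ⬝ᵥ Mu.mulVec a) :
    Matrix.trace (A * ((Xu + δu • (Aᵀ * A)) - (Z + t • Matrix.vecMulVec a a))⁻¹ * Aᵀ) ≤
      Matrix.trace (A * (Xu - Z)⁻¹ * Aᵀ) := by
  obtain ⟨i, hai⟩ := ha
  replace hai : a = A i := hai
  subst hai
  rw [show Xu + δu • (Aᵀ * A) - Z = Xu - Z + δu • (Aᵀ * A) by abel] at hPD' hMu
  have hNdet := (Xu - Z + δu • (Aᵀ * A)).isUnit_iff_isUnit_det.mp hPD'.isUnit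
  have hM : Mu.IsHermitian := hMu ▸ hPD'.inv.isHermitian
  have hq : A i ⬝ᵥ Mu *ᵥ A i = (A *ᵥ Mu *ᵥ A i) i := rfl
  rw [hq, hM.dotProduct_mul_transpose_mul_mul_mulVec] at hstep
  obtain ⟨hs, hgain⟩ := one_sub_mul_pos_and_div_mul_le ht hδu (sq_apply_le_dotProduct_self _ i)
    (hM.dotProduct_mulVec_row_le_trace A i) hstep
  have hC : (δu • (Aᵀ * A)).IsHermitian :=
    (isHermitian_conjTranspose_mul_self A).smul (IsSelfAdjoint.all δu)
  have htangent := trace_mul_inv_mul_transpose_add_le hPD hC hNdet A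
  simp only [Matrix.mul_smul, Matrix.smul_mul, trace_smul, smul_eq_mul, ← hMu] at htangent
  rw [show Xu + δu • (Aᵀ * A) - (Z + t • vecMulVec (A i) (A i)) =
      Xu - Z + δu • (Aᵀ * A) - t • vecMulVec (A i) (A i) by abel,
    trace_mul_inv_sub_smul_vecMulVec_self_mul_transpose hPD'.isHermitian hNdet A (A i) t
      (by rw [← hMu, hq]; exact hs.ne'), ← hMu, hq]
  linarith

/-- the upper-barrier step of the stable-rank BSS argument: under the stated
condition on `1/t`, adding `t·aaᵀ` to `Z` while shifting the upper wall by `δᵤ·AᵀA` does not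
increase the upper barrier potential. -/
theorem stmt18 {n d : ℕ} (Z Xu : Matrix (Fin d) (Fin d) ℝ)
    (hZ : Z.IsSymm) (hXu : Xu.IsSymm)
    (A : Matrix (Fin n) (Fin d) ℝ) (a : Fin d → ℝ) (ha : ∃ i : Fin n, a = fun j => A i j)
    (t δu : ℝ) (ht : 0 < t) (hδu : 0 < δu)
    (hPD : (Xu - Z).PosDef)
    (hPD' : (Xu + δu • (Aᵀ * A) - Z).PosDef)
    (Mu : Matrix (Fin d) (Fin d) ℝ) (hMu : Mu = (Xu + δu • (Aᵀ * A) - Z)⁻¹)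
    (hstep : 1 / t ≥
        (a ⬝ᵥ (Mu * (Aᵀ * A) * Mu).mulVec a) /
          (δu * Matrix.trace (A * Mu * (Aᵀ * A) * Mu * Aᵀ)) +
        a ⬝ᵥ Mu.mulVec a) :
    Matrix.trace (A * ((Xu + δu • (Aᵀ * A)) - (Z + t • Matrix.vecMulVec a a))⁻¹ * Aᵀ) ≤
      Matrix.trace (A * (Xu - Z)⁻¹ * Aᵀ) :=
  stmt18_general Z Xu A a ha t δu ht hδu hPD hPD' Mu hMu hstep
end
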